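/- arXiv:2201.04330 — 3 statements merged into one kernel-verified Lean document; each statement's English description precedes it below -/
import Mathlib

section
/- If d_1 ≥ d_2 ≥ … ≥ d_k are nonnegative integers with d_1 + d_2 + … + d_k ≥ Δ(G) − k + 1, then V(G) can be partitioned into k classes V_1,…,V_k such that Δ(G[V_i]) ≤ d_i for each i. -/
open SimpleGraph

/-- `H` contains a copy of `G`: an injective map preserving adjacency. -/
def ContainsCopy {α β : Type*} (G : SimpleGraph α) (H : SimpleGraph β) : Prop :=
  ∃ f : α ↪ β, ∀ a b, G.Adj a b → H.Adj (f a) (f b)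

/-- `H` is `G`-free. -/
def GFree {α β : Type*} (G : SimpleGraph α) (H : SimpleGraph β) : Prop :=
  ¬ ContainsCopy G H

/-- The `G`-free chromatic number of `H`. -/
noncomputable def gChrom {α β : Type*} (G : SimpleGraph α) (H : SimpleGraph β) : ℕ :=
  sInf {k | ∃ c : β → Fin k, ∀ i, GFree G (H.induce {v | c v = i})}

/-- `H` is `G`-free `k`-critical. -/
def GFreeCritical {α β : Type*} (G : SimpleGraph α) (H : SimpleGraph β) (k : ℕ) : Prop :=
  gChrom G H = k ∧ ∀ F : H.Subgraph, F ≠ ⊤ → gChrom G F.coe ≤ k - 1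

/-!
Take a colouring `c` minimising `2 · #(monochromatic edges) − 2 · ∑ᵥ d (c v)`. If some `v` had more
than `d (c v)` neighbours of its own colour, then, as its `deg v ≤ Δ < ∑ᵢ (dᵢ + 1)` neighbours are
shared among the colours, some colour `j` occurs at most `d j` times among them; recolouring `v`
with `j` changes the potential by `2 (#j-neighbours − d j) − 2 (#own-colour neighbours − d (c v)) < 0`.
-/

open Finset Function

namespace SimpleGraph

variable {V ι : Type*} [Fintype V] (G : SimpleGraph V) [DecidableRel G.Adj] [DecidableEq ι]

def colorDegree (c : V → ι) (v : V) (i : ι) : ℕ := #{w ∈ G.neighborFinset v | c w = i}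

def monochromaticPairCount (c : V → ι) : ℕ :=
  ∑ u, ∑ w, if G.Adj u w ∧ c u = c w then 1 else 0

lemma colorDegree_eq_sum (c : V → ι) (v : V) (i : ι) :
    G.colorDegree c v i = ∑ w, if G.Adj v w ∧ c w = i then 1 else 0 := by
  rw [colorDegree, neighborFinset_eq_filter, filter_filter, card_filter]

lemma sum_colorDegree [Fintype ι] (c : V → ι) (v : V) :
    ∑ i, G.colorDegree c v i = G.degree v := by
  rw [← card_neighborFinset_eq_degree]
  exact (card_eq_sum_card_fiberwise fun w _ => mem_univ (c w)).symm

def lovaszPotential (d : ι → ℕ) (c : V → ι) : ℤ :=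
  G.monochromaticPairCount c - 2 * ((∑ v, d (c v) : ℕ) : ℤ)

section update

variable [DecidableEq V]

lemma monochromaticPairCount_eq_add_sum_erase (c : V → ι) (v : V) :
    G.monochromaticPairCount c = 2 * G.colorDegree c v (c v) +
      ∑ u ∈ univ.erase v, ∑ w ∈ univ.erase v, if G.Adj u w ∧ c u = c w then 1 else 0 := by
  have h_from : (∑ w, if G.Adj v w ∧ c v = c w then 1 else 0) = G.colorDegree c v (c v) := by
    simp only [colorDegree_eq_sum, eq_comm]
  have h_into : (∑ u ∈ univ.erase v, if G.Adj u v ∧ c u = c v then 1 else 0) =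
      G.colorDegree c v (c v) := by
    rw [sum_erase _ (by simp), ← h_from]
    simp only [adj_comm, eq_comm]
  rw [monochromaticPairCount, ← add_sum_erase _ _ (mem_univ v), h_from]
  simp only [← add_sum_erase _ _ (mem_univ v), sum_add_distrib, h_into]
  ring

lemma monochromaticPairCount_update (c : V → ι) (v : V) (j : ι) :
    G.monochromaticPairCount (update c v j) + 2 * G.colorDegree c v (c v) =
      G.monochromaticPairCount c + 2 * G.colorDegree c v j := by
  have h_rest : ∀ u ∈ univ.erase v, update c v j u = c u := fun u hu =>
    update_of_ne (ne_of_mem_erase hu) _ _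
  have h_deg : G.colorDegree (update c v j) v j = G.colorDegree c v j := by
    refine congrArg card (filter_congr fun w hw => ?_)
    rw [update_of_ne (G.ne_of_adj ((G.mem_neighborFinset v w).1 hw)).symm]
  rw [G.monochromaticPairCount_eq_add_sum_erase c v,
    G.monochromaticPairCount_eq_add_sum_erase (update c v j) v, update_self, h_deg]
  have h_inner : ∀ u ∈ univ.erase v, ∀ w ∈ univ.erase v,
      (if G.Adj u w ∧ update c v j u = update c v j w then 1 else 0) =
        if G.Adj u w ∧ c u = c w then 1 else 0 := by
    intro u hu w hw
    rw [h_rest u hu, h_rest w hw]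
  rw [sum_congr rfl fun u hu => sum_congr rfl (h_inner u hu)]
  ring

lemma lovaszPotential_update_lt (d : ι → ℕ) {c : V → ι} {v : V} {j : ι}
    (hv : d (c v) < G.colorDegree c v (c v)) (hj : G.colorDegree c v j ≤ d j) :
    G.lovaszPotential d (update c v j) < G.lovaszPotential d c := by
  have h_pairs := G.monochromaticPairCount_update c v j
  have h_weights : ∑ u, d (update c v j u) + d (c v) = ∑ u, d (c u) + d j := by
    rw [Fintype.sum_eq_add_sum_compl v, Fintype.sum_eq_add_sum_compl v (fun u => d (c u)),
      update_self, sum_congr rfl fun u hu => by rw [update_of_ne (by simpa using hu)]]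
    ring
  unfold lovaszPotential
  omega

end update

lemma exists_colorDegree_le [Fintype ι] (d : ι → ℕ) (c : V → ι) {v : V}
    (h : G.degree v < ∑ i, (d i + 1)) : ∃ j, G.colorDegree c v j ≤ d j := by
  rw [← G.sum_colorDegree c v] at h
  obtain ⟨j, -, hj⟩ := exists_lt_of_sum_lt h
  exact ⟨j, Nat.lt_succ_iff.1 hj⟩

theorem exists_coloring_colorDegree_le [Fintype ι] (d : ι → ℕ)
    (h : G.maxDegree < ∑ i, (d i + 1)) :
    ∃ c : V → ι, ∀ v, G.colorDegree c v (c v) ≤ d (c v) := by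
  classical
  have : Nonempty ι := univ_nonempty_iff.1 (nonempty_of_sum_ne_zero (Nat.zero_lt_of_lt h).ne')
  obtain ⟨c, hc⟩ := Finite.exists_min (G.lovaszPotential d)
  refine ⟨c, fun v => not_lt.1 fun hv => ?_⟩
  obtain ⟨j, hj⟩ := G.exists_colorDegree_le d c ((G.degree_le_maxDegree v).trans_lt h)
  exact (G.lovaszPotential_update_lt d hv hj).not_ge (hc _)

end SimpleGraph

theorem stmt3_general {V : Type*} [Fintype V] (G : SimpleGraph V) [DecidableRel G.Adj]
    (k : ℕ) (d : Fin k → ℕ)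
    (hsum : ∑ i, d i + k ≥ G.maxDegree + 1) :
    ∃ c : V → Fin k, ∀ i : Fin k, ∀ v : V, c v = i →
      ((G.neighborFinset v).filter (fun w => c w = i)).card ≤ d i := by
  have h : G.maxDegree < ∑ i, (d i + 1) := by simpa [sum_add_distrib] using hsum
  obtain ⟨c, hc⟩ := G.exists_coloring_colorDegree_le d h
  exact ⟨c, fun i v hv => hv ▸ hc v⟩

theorem stmt3 {V : Type*} [Fintype V] (G : SimpleGraph V) [DecidableRel G.Adj]
    (k : ℕ) (hk : 0 < k) (d : Fin k → ℕ) (hmono : ∀ i j : Fin k, i ≤ j → d j ≤ d i)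
    (hsum : ∑ i, d i + k ≥ G.maxDegree + 1) :
    ∃ c : V → Fin k, ∀ i : Fin k, ∀ v : V, c v = i →
      ((G.neighborFinset v).filter (fun w => c w = i)).card ≤ d i :=
  stmt3_general G k d hsum
end

section
/- Let d ≥ 3, k ≥ 3, G = K_{d+1}, and let H be any graph on n = kd vertices. Then χ_G(H) + χ_G(complement of H) ≤ k + 2. -/
/-! By the Nordhaus–Gaddum bound, `H` and `Hᶜ` have proper colourings with `a` and `b`
colours, where `a + b ≤ n + 1`. Merging the colour classes of a proper colouring `d` at a time
yields parts that are `d`-colourable, hence `K_{d+1}`-free, so the `K_{d+1}`-free chromatic numbers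
are at most `⌈a / d⌉` and `⌈b / d⌉`, whose sum is at most `⌈n / d⌉ + 1 = k + 1`. -/

open SimpleGraph

theorem Nat.ceilDiv_add_ceilDiv_le {a b n d : ℕ} (hd : 0 < d) (h : a + b ≤ n + 1) :
    a ⌈/⌉ d + b ⌈/⌉ d ≤ n ⌈/⌉ d + 1 := by
  simp only [Nat.ceilDiv_eq_add_pred_div]
  calc (a + d - 1) / d + (b + d - 1) / d ≤ (a + d - 1 + (b + d - 1)) / d :=
        Nat.div_add_div_le_add_div
    _ ≤ (n + d - 1 + d * 1) / d := Nat.div_le_div_right (by omega)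
    _ = (n + d - 1) / d + 1 := Nat.add_mul_div_left _ _ hd

namespace SimpleGraph

variable {V : Type*} {G : SimpleGraph V}

theorem induce_compl (s : Set V) : (G.induce s)ᶜ = Gᶜ.induce s := by
  ext x y
  simp [Subtype.ext_iff]

open Classical in
theorem nonempty_coloring_of_induce_ne {α : Type*} {v : V}
    (c : (G.induce {w | w ≠ v}).Coloring α) (i : α)
    (hi : ∀ w (hw : G.Adj v w), c ⟨w, hw.ne'⟩ ≠ i) : Nonempty (G.Coloring α) := by
  refine ⟨Coloring.mk (fun w => if hw : w = v then i else c ⟨w, hw⟩) ?_⟩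
  intro a b hab
  by_cases ha : a = v <;> by_cases hb : b = v
  · exact absurd (ha.trans hb.symm) hab.ne
  · subst ha; simpa [hb] using (hi b hab).symm
  · subst hb; simpa [ha] using hi a hab.symm
  · simpa [ha, hb] using c.valid (v := ⟨a, ha⟩) (w := ⟨b, hb⟩) hab

theorem colorable_succ_of_induce_ne {v : V} {m : ℕ}
    (h : (G.induce {w | w ≠ v}).Colorable m) : G.Colorable (m + 1) := by
  obtain ⟨c⟩ := h
  exact nonempty_coloring_of_induce_ne
    ((Embedding.completeGraph Fin.castSuccEmb).toHom.comp c) (Fin.last m)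
    fun w _ => (Fin.castSucc_lt_last _).ne

theorem colorable_of_induce_ne_of_degree_lt [Fintype V] [DecidableRel G.Adj] {v : V} {m : ℕ}
    (h : (G.induce {w | w ≠ v}).Colorable m) (hdeg : G.degree v < m) : G.Colorable m := by
  obtain ⟨c⟩ := h
  let used : Finset (Fin m) :=
    (G.neighborFinset v).attach.image fun w : G.neighborFinset v =>
      c ⟨w, ((G.mem_neighborFinset v w).1 w.2).ne'⟩
  have hused : used.card < Fintype.card (Fin m) := by
    calc used.card ≤ (G.neighborFinset v).attach.card := Finset.card_image_le
      _ < _ := by simpa using hdeg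
  obtain ⟨i, -, hi⟩ := Finset.exists_mem_notMem_of_card_lt_card hused
  refine nonempty_coloring_of_induce_ne c i fun w hw hwi => hi ?_
  exact Finset.mem_image.2 ⟨⟨w, (G.mem_neighborFinset v w).2 hw⟩, Finset.mem_attach _ _, hwi⟩

universe u in
theorem exists_colorable_add_colorable_compl_le {V : Type u} [Fintype V] (G : SimpleGraph V) :
    ∃ a b, G.Colorable a ∧ Gᶜ.Colorable b ∧ a + b ≤ Fintype.card V + 1 := by
  suffices ∀ n (W : Type u) [Fintype W] (H : SimpleGraph W), Fintype.card W = n →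
      ∃ a b, H.Colorable a ∧ Hᶜ.Colorable b ∧ a + b ≤ n + 1 from this _ V G rfl
  intro n
  induction n with
  | zero =>
    intro W _ H hW
    have : IsEmpty W := Fintype.card_eq_zero_iff.1 hW
    exact ⟨0, 0, .of_isEmpty 0, .of_isEmpty 0, by omega⟩
  | succ n ih =>
    intro W _ H hW
    classical
    obtain ⟨v⟩ : Nonempty W := Fintype.card_pos_iff.1 (by omega)
    obtain ⟨a, b, hA, hB, hab⟩ :=
      ih _ (H.induce {w | w ≠ v}) (by rw [Set.card_ne_eq, hW]; rfl)
    rw [induce_compl] at hB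
    have hdeg : H.degree v + Hᶜ.degree v = n := by
      have := H.degree_lt_card_verts v
      rw [degree_compl]
      omega
    by_cases hHv : H.degree v < a
    · exact ⟨a, b + 1, colorable_of_induce_ne_of_degree_lt hA hHv,
        colorable_succ_of_induce_ne hB, by omega⟩
    by_cases hHcv : Hᶜ.degree v < b
    · exact ⟨a + 1, b, colorable_succ_of_induce_ne hA,
        colorable_of_induce_ne_of_degree_lt hB hHcv, by omega⟩
    exact ⟨a + 1, b + 1, colorable_succ_of_induce_ne hA, colorable_succ_of_induce_ne hB, by omega⟩

theorem gFree_completeGraph_of_colorable {d : ℕ} (h : G.Colorable d) :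
    GFree (completeGraph (Fin (d + 1))) G := by
  rintro ⟨f, hf⟩
  obtain ⟨c⟩ := h
  have hinj : Function.Injective (c ∘ f) := fun i j hij => by
    by_contra hne
    exact c.valid (hf i j hne) hij
  simpa using Fintype.card_le_of_injective _ hinj

theorem gChrom_completeGraph_le_ceilDiv {d m : ℕ} (hd : 0 < d) (h : G.Colorable m) :
    gChrom (completeGraph (Fin (d + 1))) G ≤ m ⌈/⌉ d := by
  obtain ⟨c⟩ := h
  have hlt : ∀ w, (c w : ℕ) / d < m ⌈/⌉ d := fun w => by
    rw [Nat.div_lt_iff_lt_mul hd, mul_comm]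
    exact (c w).2.trans_le (le_smul_ceilDiv hd)
  refine Nat.sInf_le ⟨fun w => ⟨c w / d, hlt w⟩, fun i => gFree_completeGraph_of_colorable ?_⟩
  refine ⟨Coloring.mk (fun w => ⟨c w % d, Nat.mod_lt _ hd⟩) fun {x y} hxy hmod => ?_⟩
  have hdiv : (c x : ℕ) / d = c y / d := by
    have hx := congrArg Fin.val x.2
    have hy := congrArg Fin.val y.2
    simp only at hx hy
    rw [hx, hy]
  exact c.valid hxy (Fin.ext (Nat.ext_div_mod hdiv (congrArg Fin.val hmod)))

theorem gChrom_completeGraph_add_gChrom_compl_le [Fintype V] {d : ℕ} (hd : 0 < d)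
    (G : SimpleGraph V) :
    gChrom (completeGraph (Fin (d + 1))) G + gChrom (completeGraph (Fin (d + 1))) Gᶜ ≤
      Fintype.card V ⌈/⌉ d + 1 := by
  obtain ⟨a, b, hA, hB, hab⟩ := exists_colorable_add_colorable_compl_le G
  exact (add_le_add (gChrom_completeGraph_le_ceilDiv hd hA)
    (gChrom_completeGraph_le_ceilDiv hd hB)).trans (Nat.ceilDiv_add_ceilDiv_le hd hab)

end SimpleGraph

theorem stmt13_general {β : Type*} [Fintype β] (d k : ℕ) (hd : 3 ≤ d)
    (H : SimpleGraph β) (hn : Fintype.card β = k * d) :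
    gChrom (completeGraph (Fin (d + 1))) H + gChrom (completeGraph (Fin (d + 1))) Hᶜ ≤
      k + 2 := by
  have hd₀ : 0 < d := by omega
  calc _ ≤ Fintype.card β ⌈/⌉ d + 1 := gChrom_completeGraph_add_gChrom_compl_le hd₀ H
    _ = k + 1 := by rw [hn, mul_comm, ← smul_eq_mul, smul_ceilDiv hd₀]
    _ ≤ k + 2 := by omega

theorem stmt13 {β : Type*} [Fintype β] (d k : ℕ) (hd : 3 ≤ d) (hk : 3 ≤ k)
    (H : SimpleGraph β) (hn : Fintype.card β = k * d) :
    gChrom (completeGraph (Fin (d + 1))) H + gChrom (completeGraph (Fin (d + 1))) Hᶜ ≤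
      k + 2 :=
  stmt13_general d k hd H hn
end

section
/- Let d ≥ 3, k ≥ 3, G = K_{d+1}, and let H be a graph on kd vertices. If there exists a subset S of V(H) of size exactly 2d such that both H[S] and the complement graph restricted to S contain no K_{d+1}, then χ_G(H) + χ_G(complement of H) ≤ k + 1. -/
open SimpleGraph

/-!
Write `G = K_{d+1}`. As `S` is a `G`-free class for both `H` and `Hᶜ`, it suffices to colour the
remaining `(k - 2) * d` vertices, which is a Nordhaus–Gaddum type bound: every vertex set `V` of
`m * d` vertices admits `G`-free colourings of `H[V]` and `Hᶜ[V]` with `a + b ≤ m + 1` colours.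

Induct on `m`. Cut `V` into blocks `D₀, …, D_m` of `d` vertices with `H`-degrees (inside `V`)
decreasing from block to block, and suppose `V` has no such pair of colourings. The inductive
colourings of `V \ D_j`, with `a_j` and `b_j` colours, must then have `a_j + b_j = m + 1`, since
`D_j` can always be added as a new class to both. A vertex with fewer than `a * d` neighbours in
an `a`-colouring has fewer than `d` in some class and joins it greedily; so `D_j` contains a vertex
of degree `< a_j d` (else it joins the `Hᶜ`-colouring) and one of degree `≥ a_j d` (else it joins
the `H`-colouring). As degrees decrease along the blocks, `a_j` is strictly decreasing, yet it
takes `m + 1` values in `[1, m]`.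
-/

open Finset

lemma containsCopy_iff_isContained {α β : Type*} {G : SimpleGraph α} {H : SimpleGraph β} :
    ContainsCopy G H ↔ G ⊑ H :=
  ⟨fun ⟨f, hf⟩ => ⟨⟨⟨f, hf _ _⟩, f.injective⟩⟩,
    fun ⟨e⟩ => ⟨e.toEmbedding, fun _ _ => e.toHom.map_adj⟩⟩

lemma gFree_completeGraph_induce_iff {β : Type*} (H : SimpleGraph β) (s : Set β) (n : ℕ) :
    GFree (completeGraph (Fin n)) (H.induce s) ↔ H.CliqueFreeOn s n := by
  rw [GFree, containsCopy_iff_isContained, ← not_cliqueFree_iff_top_isContained, not_not,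
    cliqueFree_induce_iff]

namespace Finset

variable {β α : Type*} [DecidableEq β] [LinearOrder α]

lemma exists_subset_card_eq_forall_le (w : β → α) {W : Finset β} :
    ∀ {t : ℕ}, t ≤ #W → ∃ D ⊆ W, #D = t ∧ ∀ x ∈ D, ∀ y ∈ W \ D, w y ≤ w x
  | 0, _ => ⟨∅, empty_subset W, card_empty, by simp⟩
  | t + 1, ht => by
    obtain ⟨D, hDW, hD, hmax⟩ := exists_subset_card_eq_forall_le w (Nat.le_of_succ_le ht)
    obtain ⟨x, hx, hxmax⟩ := exists_max_image (W \ D) w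
      (by rw [← card_pos, card_sdiff_of_subset hDW]; omega)
    obtain ⟨hxW, hxD⟩ := mem_sdiff.1 hx
    refine ⟨insert x D, insert_subset hxW hDW, by rw [card_insert_of_notMem hxD, hD], ?_⟩
    intro z hz y hy
    rw [sdiff_insert] at hy
    rcases mem_insert.1 hz with rfl | hzD
    · exact hxmax y (mem_of_mem_erase hy)
    · exact hmax z hzD y (mem_of_mem_erase hy)

lemma exists_sorted_blocks (w : β → α) (d : ℕ) :
    ∀ {t : ℕ} {V : Finset β}, t * d ≤ #V →
      ∃ D : Fin t → Finset β, (∀ j, D j ⊆ V ∧ #(D j) = d) ∧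
        ∀ ⦃i j⦄, i < j → ∀ x ∈ D i, ∀ y ∈ D j, w y ≤ w x
  | 0, _, _ => ⟨Fin.elim0, fun j => j.elim0, fun i => i.elim0⟩
  | t + 1, V, hV => by
    obtain ⟨D₀, hD₀V, hD₀, hmax⟩ :=
      exists_subset_card_eq_forall_le w (W := V) (t := d) (by rw [Nat.succ_mul] at hV; omega)
    obtain ⟨D, hD, hsorted⟩ := exists_sorted_blocks w d (t := t) (V := V \ D₀)
      (by rw [card_sdiff_of_subset hD₀V, hD₀]; rw [Nat.succ_mul] at hV; omega)
    refine ⟨Fin.cons D₀ D, Fin.cases ⟨hD₀V, hD₀⟩ fun j => ⟨(hD j).1.trans sdiff_subset, (hD j).2⟩,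
      fun i j hij => ?_⟩
    induction j using Fin.cases with
    | zero => exact absurd hij (Fin.not_lt_zero i)
    | succ j =>
      induction i using Fin.cases with
      | zero => exact fun x hx y hy => hmax x hx y ((hD j).1 hy)
      | succ i => exact hsorted (Fin.succ_lt_succ_iff.1 hij)

end Finset

namespace SimpleGraph

variable {β : Type*} [DecidableEq β] {H : SimpleGraph β} {d : ℕ}

lemma CliqueFreeOn.insert [DecidableRel H.Adj] {P : Finset β} {v : β}
    (hP : H.CliqueFreeOn P (d + 1)) (hv : #{y ∈ P | H.Adj v y} < d) :
    H.CliqueFreeOn ↑(insert v P) (d + 1) := by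
  intro t ht hclique
  by_cases hvt : v ∈ t
  · have hsub : t.erase v ⊆ {y ∈ P | H.Adj v y} := by
      intro y hy
      obtain ⟨hyv, hyt⟩ := mem_erase.1 hy
      have hyP : y ∈ P := (mem_insert.1 (ht hyt)).resolve_left hyv
      exact mem_filter.2 ⟨hyP, hclique.isClique hvt hyt (Ne.symm hyv)⟩
    have := card_le_card hsub
    rw [card_erase_of_mem hvt, hclique.card_eq] at this
    omega
  · refine hP (fun y hy => ?_) hclique
    exact (mem_insert.1 (ht hy)).resolve_left (ne_of_mem_of_not_mem hy hvt)

/-- `χ_G(H[V]) ≤ a` for `G = K_n`, with the colours taken in `ℕ`. -/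
def CliqueFreeColorableOn (H : SimpleGraph β) (n : ℕ) (V : Finset β) (a : ℕ) : Prop :=
  ∃ c : β → ℕ, (∀ v ∈ V, c v < a) ∧ ∀ i, H.CliqueFreeOn ↑{v ∈ V | c v = i} n

namespace CliqueFreeColorableOn

lemma union {n : ℕ} {V D : Finset β} {a : ℕ} (hV : H.CliqueFreeColorableOn n V a)
    (hD : H.CliqueFreeOn D n) : H.CliqueFreeColorableOn n (V ∪ D) (a + 1) := by
  obtain ⟨c, hlt, hfib⟩ := hV
  refine ⟨fun x => if x ∈ D then a else c x, fun x hx => ?_, fun i => ?_⟩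
  · dsimp only
    split_ifs with hxD
    · exact Nat.lt_succ_self a
    · exact Nat.lt_succ_of_lt (hlt x ((mem_union.1 hx).resolve_right hxD))
  · by_cases hia : i = a
    · refine hD.subset _ (coe_subset.2 fun x hx => ?_)
      simp only [mem_filter, mem_union] at hx
      by_contra hxD
      rw [if_neg hxD] at hx
      exact (hlt x (hx.1.resolve_right hxD)).ne (hx.2.trans hia)
    · refine (hfib i).subset _ (coe_subset.2 fun x hx => ?_)
      simp only [mem_filter, mem_union] at hx
      rw [mem_filter]
      split_ifs at hx with hxD
      · exact absurd hx.2.symm hia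
      · exact ⟨hx.1.resolve_right hxD, hx.2⟩

lemma insert [DecidableRel H.Adj] {V : Finset β} {a : ℕ} {v : β}
    (hV : H.CliqueFreeColorableOn (d + 1) V a) (hv : #{y ∈ V | H.Adj v y} < a * d) :
    H.CliqueFreeColorableOn (d + 1) (insert v V) a := by
  by_cases hvV : v ∈ V
  · rwa [Finset.insert_eq_of_mem hvV]
  obtain ⟨c, hlt, hfib⟩ := hV
  obtain ⟨i, hi, hfew⟩ := exists_card_fiber_lt_of_card_lt_mul (f := c) (t := range a)
    (by rwa [card_range])
  rw [filter_comm] at hfew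
  refine ⟨Function.update c v i, fun x hx => ?_, fun j => ?_⟩
  · rcases mem_insert.1 hx with rfl | hxV
    · simpa using hi
    · rw [Function.update_of_ne (ne_of_mem_of_not_mem hxV hvV)]
      exact hlt x hxV
  · have hsub : {x ∈ Insert.insert v V | Function.update c v i x = j} ⊆
        Insert.insert v {x ∈ V | c x = j} := by
      intro x hx
      rw [mem_filter] at hx
      rw [mem_insert, mem_filter]
      rcases eq_or_ne x v with rfl | hxv
      · exact Or.inl rfl
      · rw [Function.update_of_ne hxv] at hx
        exact Or.inr ⟨(mem_insert.1 hx.1).resolve_left hxv, hx.2⟩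
    by_cases hji : j = i
    · subst hji
      exact ((hfib j).insert hfew).subset _ (coe_subset.2 hsub)
    · refine (hfib j).subset _ (coe_subset.2 fun x hx => ?_)
      have hxv : x ≠ v := by
        rintro rfl
        exact hji (by simpa [eq_comm] using hx)
      exact (mem_insert.1 (hsub hx)).resolve_left hxv

lemma union_of_card_adj_lt [DecidableRel H.Adj] {V D : Finset β} {a : ℕ}
    (hV : H.CliqueFreeColorableOn (d + 1) V a)
    (hD : ∀ u ∈ D, #{y ∈ V ∪ D | H.Adj u y} < a * d) :
    H.CliqueFreeColorableOn (d + 1) (V ∪ D) a := by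
  induction D using Finset.induction_on with
  | empty => simpa using hV
  | insert u D _ ih =>
    rw [union_insert]
    refine (ih fun w hw => ?_).insert ?_
    · refine lt_of_le_of_lt (card_le_card ?_) (hD w (mem_insert_of_mem hw))
      exact filter_subset_filter _ (union_subset_union_right (subset_insert u D))
    · refine lt_of_le_of_lt (card_le_card ?_) (hD u (mem_insert_self u D))
      exact filter_subset_filter _ (union_subset_union_right (subset_insert u D))

end CliqueFreeColorableOn

lemma card_filter_compl_adj_add_card_filter_adj [DecidableRel H.Adj] {V : Finset β} {u : β}
    (hu : u ∈ V) : #{y ∈ V | Hᶜ.Adj u y} + #{y ∈ V | H.Adj u y} + 1 = #V := by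
  have hcompl : {y ∈ V | Hᶜ.Adj u y} = {y ∈ V.erase u | ¬ H.Adj u y} := by
    ext y
    simp only [mem_filter, mem_erase, compl_adj, ne_eq, eq_comm (a := y)]
    tauto
  have hadj : {y ∈ V | H.Adj u y} = {y ∈ V.erase u | H.Adj u y} := by
    ext y
    simp only [mem_filter, mem_erase]
    exact ⟨fun h => ⟨⟨(H.ne_of_adj h.2).symm, h.1⟩, h.2⟩, fun h => ⟨h.1.2, h.2⟩⟩
  rw [hcompl, hadj, add_comm #_, card_filter_add_card_filter_not, card_erase_add_one hu]

lemma exists_light_and_heavy_of_block [DecidableRel H.Adj] {V D : Finset β} {m a b : ℕ}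
    (hDV : D ⊆ V) (hD : #D = d) (hV : #V = (m + 1) * d)
    (ha : H.CliqueFreeColorableOn (d + 1) (V \ D) a)
    (hb : Hᶜ.CliqueFreeColorableOn (d + 1) (V \ D) b) (hab : a + b ≤ m + 1)
    (hnone : ¬ ∃ a' b', H.CliqueFreeColorableOn (d + 1) V a' ∧
      Hᶜ.CliqueFreeColorableOn (d + 1) V b' ∧ a' + b' ≤ m + 2) :
    (∃ u ∈ D, #{y ∈ V | H.Adj u y} < a * d) ∧ (∃ u ∈ D, a * d ≤ #{y ∈ V | H.Adj u y}) ∧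
      1 ≤ a ∧ a ≤ m := by
  have hunion : V \ D ∪ D = V := sdiff_union_of_subset hDV
  have hfree {G : SimpleGraph β} : G.CliqueFreeOn D (d + 1) := cliqueFreeOn_of_card_lt _ (by omega)
  have htight : a + b = m + 1 := by
    by_contra
    refine hnone ⟨a + 1, b + 1, ?_, ?_, by omega⟩
    · simpa only [hunion] using ha.union hfree
    · simpa only [hunion] using hb.union hfree
  have hVab : #V = a * d + b * d := by rw [hV, ← htight, add_mul]
  have hlight : ∃ u ∈ D, #{y ∈ V | H.Adj u y} < a * d := by
    by_contra! hheavy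
    refine hnone ⟨a + 1, b, ?_, ?_, by omega⟩
    · simpa only [hunion] using ha.union hfree
    · have := hb.union_of_card_adj_lt fun u hu => by
        have := card_filter_compl_adj_add_card_filter_adj (H := H) (hDV hu)
        have := hheavy u hu
        rw [hunion]
        omega
      rwa [hunion] at this
  have hheavy : ∃ u ∈ D, a * d ≤ #{y ∈ V | H.Adj u y} := by
    by_contra! hall
    refine hnone ⟨a, b + 1, ?_, ?_, by omega⟩
    · have := ha.union_of_card_adj_lt fun u hu => by rw [hunion]; exact hall u hu
      rwa [hunion] at this
    · simpa only [hunion] using hb.union hfree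
  obtain ⟨v, hvD, hv⟩ := hlight
  obtain ⟨u, hu, hu'⟩ := hheavy
  -- `u` has fewer than `#V = a * d + b * d` neighbours, yet at least `a * d`
  have hb0 : b ≠ 0 := by
    rintro rfl
    have := card_filter_compl_adj_add_card_filter_adj (H := H) (hDV hu)
    omega
  have ha0 : a ≠ 0 := by
    rintro rfl
    omega
  exact ⟨⟨v, hvD, hv⟩, ⟨u, hu, hu'⟩, by omega, by omega⟩

theorem exists_cliqueFreeColorableOn_add_le :
    ∀ (m : ℕ) {V : Finset β}, #V = m * d → ∃ a b, H.CliqueFreeColorableOn (d + 1) V a ∧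
      Hᶜ.CliqueFreeColorableOn (d + 1) V b ∧ a + b ≤ m + 1
  | 0, V, hV => by
    rw [zero_mul, card_eq_zero] at hV
    subst hV
    exact ⟨0, 0, ⟨fun _ => 0, by simp, by simp⟩, ⟨fun _ => 0, by simp, by simp⟩, by omega⟩
  | m + 1, V, hV => by
    classical
    by_contra hnone
    obtain ⟨D, hD, hsorted⟩ := exists_sorted_blocks (fun u => #{y ∈ V | H.Adj u y}) d hV.ge
    have hrest (j : Fin (m + 1)) : #(V \ D j) = m * d := by
      rw [card_sdiff_of_subset (hD j).1, hV, (hD j).2, add_one_mul, Nat.add_sub_cancel]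
    choose a b ha hb hab using fun j => exists_cliqueFreeColorableOn_add_le m (hrest j)
    have hblock (j : Fin (m + 1)) :=
      exists_light_and_heavy_of_block (hD j).1 (hD j).2 hV (ha j) (hb j) (hab j) hnone
    have ha_anti : StrictAnti a := by
      intro i j hij
      obtain ⟨v, hv, hvlight⟩ := (hblock i).1
      obtain ⟨u, hu, huheavy⟩ := (hblock j).2.1
      exact Nat.lt_of_mul_lt_mul_right (huheavy.trans_lt ((hsorted hij v hv u hu).trans_lt hvlight))
    have := card_le_card_of_injOn a (s := univ) (t := Icc 1 m)
      (fun j _ => mem_Icc.2 (hblock j).2.2) ha_anti.injective.injOn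
    simp at this

end SimpleGraph

lemma gChrom_le_of_cliqueFreeColorableOn_univ {β : Type*} [Fintype β] {H : SimpleGraph β}
    {n a : ℕ} (h : H.CliqueFreeColorableOn n univ a) : gChrom (completeGraph (Fin n)) H ≤ a := by
  obtain ⟨c, hlt, hfib⟩ := h
  refine Nat.sInf_le ⟨fun v => ⟨c v, hlt v (mem_univ v)⟩, fun i => ?_⟩
  rw [gFree_completeGraph_induce_iff]
  convert hfib i using 1
  ext v
  simp [Fin.ext_iff]

theorem stmt14_general {β : Type*} [Fintype β] (d k : ℕ) (hk : 3 ≤ k)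
    (H : SimpleGraph β) (hn : Fintype.card β = k * d)
    (S : Finset β) (hS : S.card = 2 * d)
    (h1 : GFree (completeGraph (Fin (d + 1))) (H.induce (↑S : Set β)))
    (h2 : GFree (completeGraph (Fin (d + 1))) (Hᶜ.induce (↑S : Set β))) :
    gChrom (completeGraph (Fin (d + 1))) H + gChrom (completeGraph (Fin (d + 1))) Hᶜ ≤
      k + 1 := by
  classical
  have hrest : #(univ \ S) = (k - 2) * d := by
    rw [card_sdiff_of_subset (subset_univ S), card_univ, hn, hS, Nat.sub_mul]
  obtain ⟨a, b, ha, hb, hab⟩ := H.exists_cliqueFreeColorableOn_add_le (k - 2) hrest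
  have hcover : univ \ S ∪ S = univ := sdiff_union_of_subset (subset_univ S)
  have hH := gChrom_le_of_cliqueFreeColorableOn_univ
    (hcover ▸ ha.union ((gFree_completeGraph_induce_iff H S (d + 1)).1 h1))
  have hHc := gChrom_le_of_cliqueFreeColorableOn_univ
    (hcover ▸ hb.union ((gFree_completeGraph_induce_iff Hᶜ S (d + 1)).1 h2))
  omega

theorem stmt14 {β : Type*} [Fintype β] (d k : ℕ) (hd : 3 ≤ d) (hk : 3 ≤ k)
    (H : SimpleGraph β) (hn : Fintype.card β = k * d)
    (S : Finset β) (hS : S.card = 2 * d)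
    (h1 : GFree (completeGraph (Fin (d + 1))) (H.induce (↑S : Set β)))
    (h2 : GFree (completeGraph (Fin (d + 1))) (Hᶜ.induce (↑S : Set β))) :
    gChrom (completeGraph (Fin (d + 1))) H + gChrom (completeGraph (Fin (d + 1))) Hᶜ ≤
      k + 1 :=
  stmt14_general d k hk H hn S hS h1 h2
end
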